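/- arXiv:1607.05056 — 4 statements merged into one kernel-verified Lean document; each statement's English description precedes it below -/
import Mathlib

section
/- If M ≤ G is an almost-malnormal subgroup and H ≤ M is an infinite subgroup, then the q-normaliser N^q_G(H) is contained in M. -/
theorem qNormaliser_le_almostMalnormal {G : Type*} [Group G] (H M : Subgroup G)
    (hHM : H ≤ M) (hHinf : (H : Set G).Infinite)
    (hmal : ∀ g : G, g ∉ M → ((M : Set G) ∩ ((fun m => g * m * g⁻¹) '' (M : Set G))).Finite) :
    Subgroup.closure {g : G | ((H : Set G) ∩ ((fun h => g * h * g⁻¹) '' (H : Set G))).Infinite}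
      ≤ M := by
  rw [Subgroup.closure_le]
  intro g hg
  by_contra hgM
  refine hg (Set.Finite.subset (hmal g hgM) ?_)
  rintro x ⟨hx1, h, hh, rfl⟩
  exact ⟨hHM hx1, h, hHM hh, rfl⟩
end

section
/- Suppose π has finite stabilisers and b is a cocycle for π. If K = ker b is infinite and not equal to G, then K is almost-malnormal in G. -/
theorem ker_cocycle_almostMalnormal {G V : Type*} [Group G] [AddCommGroup V] [Module ℂ V]
    (π : Representation ℂ G V) (b : G → V)
    (hb : ∀ g h : G, b (g * h) = b g + π g (b h))
    (hfs : ∀ ξ : V, ξ ≠ 0 → {g : G | π g ξ = ξ}.Finite)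
    (hinf : {g : G | b g = 0}.Infinite)
    (hne : ∃ g : G, b g ≠ 0) :
    ∀ g : G, b g ≠ 0 →
      ({x : G | b x = 0} ∩ ((fun k => g * k * g⁻¹) '' {x : G | b x = 0})).Finite := by
  intro g hg
  have h1 : b 1 = 0 := by
    have := hb 1 1
    simp at this
    linear_combination (norm := abel) this
  have hinv : ∀ y : G, b y⁻¹ = - π y⁻¹ (b y) := by
    intro y
    have := hb y⁻¹ y
    simp [h1] at this
    rw [eq_neg_iff_add_eq_zero]
    exact this.symm
  apply Set.Finite.subset (hfs (b g) hg)
  rintro x ⟨hx, k, hk, rfl⟩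
  simp only [Set.mem_setOf_eq] at hx hk ⊢
  have e1 : b (g * k * g⁻¹) = b g + π (g * k) (b g⁻¹) := by
    rw [hb (g * k) g⁻¹, hb g k, hk]
    simp
  have e2 : (π (g * k)) (b g⁻¹) = - π (g * k * g⁻¹) (b g) := by
    rw [hinv g]
    simp [map_mul]
  rw [e1, e2] at hx
  have := sub_eq_zero.mp (by linear_combination (norm := abel) -hx : (π (g * k * g⁻¹)) (b g) - b g = 0)
  exact this
end

section
/- Let π be a unitary representation on a Hilbert space H, C ⊂ G a finite subset, and b a cocycle satisfying b(g) = (1/|C|) Σ_{c∈C} b(cg) for all g ∈ G. Then every c ∈ C acts trivially on the closed span of the image of b, i.e., π(c)ξ = ξ for all ξ in the image of b. -/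
open RCLike Finset
open scoped InnerProductSpace

theorem averaging_cocycle_fixes_image {G V : Type*} [Group G]
    [NormedAddCommGroup V] [InnerProductSpace ℂ V] [CompleteSpace V]
    (π : G →* (V ≃ₗᵢ[ℂ] V)) (b : G → V)
    (hb : ∀ g h : G, b (g * h) = b g + π g (b h))
    (C : Finset G) (hC : C.Nonempty)
    (havg : ∀ g : G, b g = (C.card : ℂ)⁻¹ • ∑ c ∈ C, b (c * g)) :
    ∀ c ∈ C, ∀ g : G, π c (b g) = b g := by
  have hcard : (C.card : ℂ) ≠ 0 := by
    exact_mod_cast Nat.cast_ne_zero.mpr (Finset.card_ne_zero_of_mem hC.choose_spec)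
  have hb1 : b 1 = 0 := by
    have h := hb 1 1
    rw [one_mul] at h
    have h2 : π 1 (b 1) = 0 := left_eq_add.mp h
    simpa [map_one] using h2
  have hsum0 : ∑ c ∈ C, b c = 0 := by
    have h := havg 1
    simp only [mul_one, hb1] at h
    rcases smul_eq_zero.mp h.symm with h' | h'
    · exact absurd h' (inv_ne_zero hcard)
    · exact h'
  intro c hc g
  set ξ := b g with hξ
  have key : ξ = (C.card : ℂ)⁻¹ • ∑ d ∈ C, π d ξ := by
    have h := havg g
    simp only [hb] at h
    rw [Finset.sum_add_distrib, hsum0, zero_add] at h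
    exact h
  have hinner : (C.card : ℂ) * ⟪ξ, ξ⟫_ℂ = ∑ d ∈ C, ⟪ξ, π d ξ⟫_ℂ := by
    have h := congrArg (fun v => ⟪ξ, v⟫_ℂ) key
    simp only [inner_smul_right, inner_sum] at h
    rw [h, ← mul_assoc, mul_inv_cancel₀ hcard, one_mul]
  have hre : ∀ d ∈ C, re ⟪ξ, π d ξ⟫_ℂ ≤ ‖ξ‖ ^ 2 := by
    intro d _
    calc re ⟪ξ, π d ξ⟫_ℂ ≤ ‖ξ‖ * ‖π d ξ‖ := re_inner_le_norm ξ _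
      _ = ‖ξ‖ ^ 2 := by rw [(π d).norm_map]; ring
  have hsumre : ∑ d ∈ C, re ⟪ξ, π d ξ⟫_ℂ = ∑ d ∈ C, ‖ξ‖ ^ 2 := by
    have h1 : re (∑ d ∈ C, ⟪ξ, π d ξ⟫_ℂ) = ∑ d ∈ C, re ⟪ξ, π d ξ⟫_ℂ :=
      map_sum (RCLike.re) _ C
    rw [← h1, ← hinner, Finset.sum_const, nsmul_eq_mul]
    simp [Complex.mul_re, RCLike.re_to_complex, RCLike.im_to_complex,
      ← RCLike.re_to_complex, ← RCLike.im_to_complex,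
      inner_self_im, inner_self_eq_norm_sq]
    left
    rw [← Complex.ofReal_pow]
    exact Complex.ofReal_re _
  have heach : re ⟪ξ, π c ξ⟫_ℂ = ‖ξ‖ ^ 2 := by
    have := (Finset.sum_eq_sum_iff_of_le hre).mp hsumre c hc
    exact this
  have hzero : ‖π c ξ - ξ‖ ^ 2 = 0 := by
    have h := @norm_sub_sq ℂ V _ _ _ (π c ξ) ξ
    rw [h, inner_re_symm, heach, (π c).norm_map]
    ring
  have := norm_eq_zero.mp (pow_eq_zero_iff (two_ne_zero) |>.mp hzero)
  exact sub_eq_zero.mp this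
end

section
/- Let π be a unitary representation, C a finite conjugacy class of G, and b a cocycle with b(g) = (1/|C|) Σ_{c∈C} b(cg) for all g. Then for all g ∈ G and c ∈ C, b(gcg⁻¹) = π(g)b(c); in particular {b(c) : c ∈ C} spans a finite-dimensional π-invariant subspace. -/
theorem averaging_cocycle_conj_class {G V : Type*} [Group G]
    [NormedAddCommGroup V] [InnerProductSpace ℂ V] [CompleteSpace V]
    (π : G →* (V ≃ₗᵢ[ℂ] V)) (b : G → V)
    (hb : ∀ g h : G, b (g * h) = b g + π g (b h))
    (C : Finset G) (hC : C.Nonempty)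
    (hconj : ∀ g : G, ∀ c ∈ C, g * c * g⁻¹ ∈ C)
    (havg : ∀ g : G, b g = (C.card : ℂ)⁻¹ • ∑ c ∈ C, b (c * g)) :
    (∀ g : G, ∀ c ∈ C, b (g * c * g⁻¹) = π g (b c)) ∧
    (∀ g : G, ∀ v ∈ Submodule.span ℂ (b '' (C : Set G)),
      π g v ∈ Submodule.span ℂ (b '' (C : Set G))) := by
  have hb1 : b 1 = 0 := by
    have h := hb 1 1
    simp at h
    exact h
  have hn : (C.card : ℂ) ≠ 0 := by
    exact_mod_cast Nat.cast_ne_zero.mpr (Finset.card_ne_zero_of_mem hC.choose_spec)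
  -- sum of b over C is zero
  have hsum0 : ∑ c ∈ C, b c = 0 := by
    have h := havg 1
    simp only [mul_one, hb1] at h
    have := h.symm
    rcases smul_eq_zero.mp this with h' | h'
    · exact absurd h' (inv_ne_zero hn)
    · exact h'
  -- averaged action fixes b g
  have hsumπ : ∀ g : G, ∑ c ∈ C, (π c) (b g) = (C.card : ℂ) • b g := by
    intro g
    have h := havg g
    have h2 : ∑ c ∈ C, b (c * g) = ∑ c ∈ C, (b c + (π c) (b g)) := by
      apply Finset.sum_congr rfl; intro c _; exact hb c g
    rw [h2, Finset.sum_add_distrib, hsum0, zero_add] at h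
    have := congrArg (fun v => (C.card : ℂ) • v) h
    simp only [smul_smul, mul_inv_cancel₀ hn, one_smul] at this
    exact this.symm
  -- each c in C fixes b g
  have key : ∀ g : G, ∀ c ∈ C, (π c) (b g) = b g := by
    intro g c hc
    set v := b g with hv
    have hzero : ∑ c ∈ C, (‖(π c) v - v‖ : ℝ) ^ 2 = 0 := by
      have hterm : ∀ c ∈ C, ‖(π c) v - v‖ ^ 2
          = 2 * ‖v‖ ^ 2 - 2 * Complex.re (inner ℂ ((π c) v) v) := by
        intro c _
        have := @norm_sub_sq ℂ V _ _ _ ((π c) v) v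
        rw [this, (π c).norm_map]
        simp only [RCLike.re_to_complex]
        ring
      rw [Finset.sum_congr rfl hterm, Finset.sum_sub_distrib]
      have h1 : ∑ c ∈ C, (2 * ‖v‖ ^ 2) = (C.card : ℝ) * (2 * ‖v‖ ^ 2) := by
        rw [Finset.sum_const, nsmul_eq_mul]
      have h2 : ∑ c ∈ C, 2 * Complex.re (inner ℂ ((π c) v) v)
          = (C.card : ℝ) * (2 * ‖v‖ ^ 2) := by
        have : ∑ c ∈ C, Complex.re (inner ℂ ((π c) v) v)
            = Complex.re (inner ℂ (∑ c ∈ C, (π c) v) v) := by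
          rw [sum_inner]; exact (Complex.re_sum _ _).symm
        rw [← Finset.mul_sum, this, hsumπ g, inner_smul_left]
        simp only [map_natCast, Complex.mul_re, Complex.natCast_re,
          Complex.natCast_im, zero_mul, sub_zero]
        have hre : (inner ℂ v v).re = ‖v‖ ^ 2 := by simpa using (inner_self_eq_norm_sq (𝕜 := ℂ) v)
        rw [hre]; ring
      rw [h1, h2, sub_self]
    have hnonneg : ∀ c ∈ C, (0 : ℝ) ≤ ‖(π c) v - v‖ ^ 2 := fun c _ => sq_nonneg _
    have := (Finset.sum_eq_zero_iff_of_nonneg hnonneg).mp hzero c hc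
    have hnorm : ‖(π c) v - v‖ = 0 := by
      have := sq_eq_zero_iff.mp this
      exact this
    have := norm_eq_zero.mp hnorm
    exact sub_eq_zero.mp this
  -- b g⁻¹ relation
  have hinv : ∀ g : G, (π g) (b g⁻¹) = - b g := by
    intro g
    have h := hb g g⁻¹
    rw [mul_inv_cancel, hb1] at h
    exact eq_neg_of_add_eq_zero_right h.symm
  have main : ∀ g : G, ∀ c ∈ C, b (g * c * g⁻¹) = π g (b c) := by
    intro g c hc
    have h1 : b (g * c * g⁻¹) = b g + (π g) (b c) + (π g) ((π c) (b g⁻¹)) := by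
      rw [mul_assoc, hb g (c * g⁻¹), hb c g⁻¹, map_add, add_assoc]
    have hcomp : ∀ a b : G, ∀ x : V, (π a) ((π b) x) = (π (a * b)) x := by
      intro a b x; rw [map_mul]; rfl
    have h3 : b g⁻¹ = - (π g⁻¹) (b g) := by
      have h4 := congrArg (fun v => (π g⁻¹) v) (hinv g)
      simp only [map_neg] at h4
      rw [hcomp, inv_mul_cancel, map_one] at h4
      simpa using h4
    rw [hcomp g c, h3, map_neg, hcomp (g * c) g⁻¹, key g _ (hconj g c hc)] at h1
    rw [h1]; abel
  refine ⟨main, ?_⟩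
  intro g v hv
  refine Submodule.span_induction ?_ ?_ ?_ ?_ hv
  · rintro x ⟨c, hc, rfl⟩
    apply Submodule.subset_span
    exact ⟨g * c * (g : G)⁻¹, hconj g c hc, main g c hc⟩
  · simp
  · intro x y _ _ hx hy
    rw [map_add]; exact Submodule.add_mem _ hx hy
  · intro a x _ hx
    rw [map_smul]; exact Submodule.smul_mem _ a hx
end
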